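/- arXiv:2605.29804 — 4 statements merged into one kernel-verified Lean document; each statement's English description precedes it below -/
import Mathlib

section
/- Let p_1, …, p_{n+2} be points in ℝ^k with k ≤ n such that |p_i − p_j| ≥ r for every i ≠ j. Then there exist a constant C_{n,k} > 0 depending only on n and k, and a line ℓ in ℝ^k through the origin, such that the orthogonal projections of the points onto ℓ satisfy |Π_ℓ(p_i) − Π_ℓ(p_j)| ≥ C_{n,k} r for every i ≠ j. -/
open Metric
open scoped RealInnerProductSpace

/-!
A direction avoiding the finitely many hyperplanes orthogonal to given nonzero vectors has
nonzero inner product with each of them. The lower bound becomes uniform by compactness of the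
product of unit spheres: the sets of tuples admitting a direction with all inner products
larger than `1 / (N + 1)` form an increasing open cover, so one of them already contains every
tuple. Applied to the normalized differences `p i - p j`, this gives the constant.
-/

section

variable {E : Type*} [NormedAddCommGroup E] [InnerProductSpace ℝ E] {I : Type*} [Finite I]

lemma exists_unit_forall_inner_ne_zero [Nontrivial E] (q : I → E) (hq : ∀ m, q m ≠ 0) :
    ∃ v : E, ‖v‖ = 1 ∧ ∀ m, ⟪q m, v⟫ ≠ 0 := by
  -- `⊥` is among the avoided proper subspaces so that the vector found is nonzero.
  let H : Option I → Subspace ℝ E := fun o => o.elim ⊥ fun m => (ℝ ∙ q m)ᗮ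
  have hH : ∀ o, H o ≠ ⊤ := by
    rintro (_ | m) h
    · exact bot_ne_top h
    · exact hq m <| inner_self_eq_zero.mp <|
        Submodule.mem_orthogonal_singleton_iff_inner_right.mp (h ▸ Submodule.mem_top)
  obtain ⟨w, hw⟩ : ∃ w : E, ∀ o, w ∉ H o := by
    by_contra! hcover
    obtain ⟨o, ho⟩ := Subspace.exists_eq_top_of_iUnion_eq_univ (p := H) <|
      Set.eq_univ_of_forall fun w => Set.mem_iUnion.mpr (hcover w)
    exact hH o ho
  have hw0 : w ≠ 0 := hw none
  refine ⟨‖w‖⁻¹ • w, by simp [norm_smul, hw0], fun m => ?_⟩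
  rw [real_inner_smul_right]
  exact mul_ne_zero (by simpa using hw0)
    fun h => hw (some m) (Submodule.mem_orthogonal_singleton_iff_inner_right.mpr h)

lemma exists_pos_forall_exists_unit_le_abs_inner [FiniteDimensional ℝ E] [Nontrivial E] :
    ∃ C : ℝ, 0 < C ∧ ∀ q : I → E, (∀ m, ‖q m‖ = 1) →
      ∃ v : E, ‖v‖ = 1 ∧ ∀ m, C ≤ |⟪q m, v⟫| := by
  let K : Set (I → E) := Set.univ.pi fun _ => sphere 0 1
  have hK : ∀ q, q ∈ K ↔ ∀ m, ‖q m‖ = 1 := by simp [K]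
  let U : ℕ → Set (I → E) := fun N =>
    ⋃ v ∈ sphere (0 : E) 1, ⋂ m, {q | 1 / ((N : ℝ) + 1) < |⟪q m, v⟫|}
  have hU_open : ∀ N, IsOpen (U N) := fun N =>
    isOpen_biUnion fun v _ => isOpen_iInter_of_finite fun m =>
      isOpen_lt continuous_const ((continuous_apply m).inner continuous_const).abs
  have hU_mono : Monotone U := fun N N' h =>
    Set.biUnion_mono subset_rfl fun v _ => Set.iInter_mono fun m _ hq =>
      Set.mem_ofPred.mpr ((Nat.one_div_le_one_div h).trans_lt hq)
  have hKU : K ⊆ ⋃ N, U N := by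
    intro q hq
    obtain ⟨v, hv, hqv⟩ := exists_unit_forall_inner_ne_zero q
      fun m h => by simpa [h] using (hK q).mp hq m
    obtain ⟨N, hN⟩ := (Filter.eventually_all.mpr fun m =>
      tendsto_one_div_add_atTop_nhds_zero_nat.eventually
        (gt_mem_nhds (abs_pos.mpr (hqv m)))).exists
    exact Set.mem_iUnion.mpr ⟨N, Set.mem_biUnion (mem_sphere_zero_iff_norm.mpr hv)
      (Set.mem_iInter.mpr hN)⟩
  obtain ⟨N, hN⟩ := (isCompact_univ_pi fun _ => isCompact_sphere (0 : E) 1).elim_directed_cover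
    U hU_open hKU hU_mono.directed_le
  refine ⟨1 / ((N : ℝ) + 1), Nat.one_div_pos_of_nat, fun q hq => ?_⟩
  obtain ⟨v, hv, hqv⟩ := Set.mem_iUnion₂.mp (hN ((hK q).mpr hq))
  exact ⟨v, mem_sphere_zero_iff_norm.mp hv, fun m => (Set.mem_iInter.mp hqv m).le⟩

lemma exists_pos_forall_exists_unit_mul_norm_le_abs_inner [FiniteDimensional ℝ E]
    [Nontrivial E] :
    ∃ C : ℝ, 0 < C ∧ ∀ q : I → E, (∀ m, q m ≠ 0) →
      ∃ v : E, ‖v‖ = 1 ∧ ∀ m, C * ‖q m‖ ≤ |⟪q m, v⟫| := by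
  obtain ⟨C, hC, hunit⟩ := exists_pos_forall_exists_unit_le_abs_inner (E := E) (I := I)
  refine ⟨C, hC, fun q hq => ?_⟩
  obtain ⟨v, hv, hqv⟩ := hunit (fun m => ‖q m‖⁻¹ • q m) fun m => norm_smul_inv_norm (hq m)
  refine ⟨v, hv, fun m => ?_⟩
  have hqm : 0 < ‖q m‖ := norm_pos_iff.mpr (hq m)
  have := hqv m
  rwa [real_inner_smul_left, abs_mul, abs_inv, abs_norm, le_inv_mul_iff₀ hqm, mul_comm] at this

lemma dist_orthogonalProjectionOnto_span_singleton {v : E} (hv : ‖v‖ = 1) (x y : E) :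
    dist (Submodule.orthogonalProjectionOnto (ℝ ∙ v) x)
      (Submodule.orthogonalProjectionOnto (ℝ ∙ v) y) = |⟪v, x - y⟫| := by
  rw [Subtype.dist_eq, dist_eq_norm, Submodule.coe_orthogonalProjectionOnto_apply,
    Submodule.coe_orthogonalProjectionOnto_apply, Submodule.starProjection_unit_singleton ℝ hv,
    Submodule.starProjection_unit_singleton ℝ hv, ← sub_smul, norm_smul, hv, mul_one,
    ← inner_sub_right, Real.norm_eq_abs]

end

theorem stmt5_general (n k : ℕ) :
    ∃ C : ℝ, 0 < C ∧
      ∀ (r : ℝ), 0 < r →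
      ∀ p : Fin (n + 2) → EuclideanSpace ℝ (Fin k),
        (∀ i j, i ≠ j → r ≤ dist (p i) (p j)) →
        ∃ v : EuclideanSpace ℝ (Fin k), ‖v‖ = 1 ∧
          ∀ i j, i ≠ j →
            C * r ≤ dist
              (Submodule.orthogonalProjectionOnto (Submodule.span ℝ {v}) (p i))
              (Submodule.orthogonalProjectionOnto (Submodule.span ℝ {v}) (p j)) := by
  rcases subsingleton_or_nontrivial (EuclideanSpace ℝ (Fin k)) with hE | hE
  · refine ⟨1, one_pos, fun r hr p hp => absurd (hp 0 1 zero_ne_one) ?_⟩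
    simpa [Subsingleton.elim (p 0) (p 1)] using hr
  obtain ⟨C, hC, hdir⟩ := exists_pos_forall_exists_unit_mul_norm_le_abs_inner
    (E := EuclideanSpace ℝ (Fin k)) (I := {ij : Fin (n + 2) × Fin (n + 2) // ij.1 ≠ ij.2})
  refine ⟨C, hC, fun r hr p hp => ?_⟩
  have hsep : ∀ i j, i ≠ j → r ≤ ‖p i - p j‖ := by simpa only [dist_eq_norm] using hp
  obtain ⟨v, hv, hCv⟩ := hdir (fun ij => p ij.1.1 - p ij.1.2)
    fun ij => norm_pos_iff.mp (hr.trans_le (hsep _ _ ij.2))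
  refine ⟨v, hv, fun i j hij => ?_⟩
  rw [dist_orthogonalProjectionOnto_span_singleton hv, real_inner_comm]
  exact (mul_le_mul_of_nonneg_left (hsep i j hij) hC.le).trans (hCv ⟨(i, j), hij⟩)

/-- Projection of separated points on a line: there is a constant `C_{n,k} > 0` such that for
any `r`-separated points `p_1, …, p_{n+2}` in `ℝ^k` (`k ≤ n`), there is a line through the
origin whose direction `v` satisfies `|Π_ℓ(p_i) − Π_ℓ(p_j)| ≥ C_{n,k} r` for `i ≠ j`. -/
theorem stmt5 (n k : ℕ) (hk : k ≤ n) :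
    ∃ C : ℝ, 0 < C ∧
      ∀ (r : ℝ), 0 < r →
      ∀ p : Fin (n + 2) → EuclideanSpace ℝ (Fin k),
        (∀ i j, i ≠ j → r ≤ dist (p i) (p j)) →
        ∃ v : EuclideanSpace ℝ (Fin k), ‖v‖ = 1 ∧
          ∀ i j, i ≠ j →
            C * r ≤ dist
              (Submodule.orthogonalProjectionOnto (Submodule.span ℝ {v}) (p i))
              (Submodule.orthogonalProjectionOnto (Submodule.span ℝ {v}) (p j)) :=
  stmt5_general n k
end

section
/- Suppose μ is an α-dimensional AD-regular measure on ℝⁿ with constant D, and k ∈ ℕ with k < α. Then for every x ∈ supp μ and 0 < r < diam(supp μ), the L^∞ beta number satisfies β_∞^k(x,r)^{α−k} ≥ 4^{−n} D^{−2} ω_n/(ω_k ω_{n−k}), where ω_j is the volume of the unit ball in ℝ^j and β_∞^k(x,r) := inf_{V ∈ Π_k} sup_{z ∈ B(x,r) ∩ supp μ} dist(z,V)/r. -/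
open MeasureTheory Metric

/-- The support of a measure: points whose every neighborhood has positive measure. -/
def msupport {E : Type*} [MeasurableSpace E] [PseudoMetricSpace E] (μ : Measure E) : Set E :=
  {x | ∀ ε : ℝ, 0 < ε → 0 < μ (ball x ε)}

/-- `β_∞^k(x,r)`: the infimum over affine `k`-planes `V` of
`sup_{z ∈ B(x,r) ∩ supp μ} dist(z,V)/r`. -/
noncomputable def betaInfty {n : ℕ} (μ : Measure (EuclideanSpace ℝ (Fin n))) (k : ℕ)
    (x : EuclideanSpace ℝ (Fin n)) (r : ℝ) : ℝ :=
  ⨅ V : {V : AffineSubspace ℝ (EuclideanSpace ℝ (Fin n)) //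
      (V : Set (EuclideanSpace ℝ (Fin n))).Nonempty ∧ Module.finrank ℝ V.direction = k},
    sSup ((fun z => Metric.infDist z (V.1 : Set (EuclideanSpace ℝ (Fin n))) / r) ''
      (closedBall x r ∩ msupport μ))

/-- The volume of the unit ball of `ℝ^j`. -/
noncomputable def unitBallVol (j : ℕ) : ℝ :=
  (volume (Metric.ball (0 : EuclideanSpace ℝ (Fin j)) 1)).toReal

/-!
Suppose every point of `B(x,r) ∩ supp μ` lies within `θ r` of an affine `k`-plane `V`, with
`θ ≤ 1/2`. A maximal `θ r`-separated subset of `B(x,r) ∩ supp μ` covers it by balls of radius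
`θ r`, so AD-regularity gives it at least `D⁻² θ^(-α)` points. The disjoint balls of radius `θ r/2`
around these points lie in a slab of half-length `2r` along `V` and half-width `3θ r/2` across it,
whose volume is `ω_k ω_(n-k) (2r)^k (3θ r/2)^(n-k)`; hence there are at most
`4^k 3^(n-k) ω_k ω_(n-k) θ^(-k) / ω_n` of them. Comparing the two counts gives
`D⁻² ω_n ≤ 4^k 3^(n-k) ω_k ω_(n-k) θ^(α-k)`, which fails for `θ^(α-k)` equal to the claimed bound
because `3^(n-k) < 4^(n-k)`. The same count for the plane `V = ℝⁿ` and `θ → 0` shows `α ≤ n`,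
which supplies `k < n`.
-/

open scoped ENNReal NNReal Finset Topology
open Module

theorem msupport_eq_support {X : Type*} [MeasurableSpace X] [PseudoMetricSpace X]
    (μ : Measure X) : msupport μ = μ.support := by
  ext x
  exact (nhds_basis_ball.mem_measureSupport).symm

theorem measure_compl_msupport {X : Type*} [MeasurableSpace X] [PseudoMetricSpace X]
    [HereditarilyLindelofSpace X] (μ : Measure X) : μ (msupport μ)ᶜ = 0 := by
  rw [msupport_eq_support]
  exact Measure.measure_compl_support

theorem TotallyBounded.exists_finset_separated_cover {X : Type*} [PseudoMetricSpace X]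
    {S : Set X} (hS : TotallyBounded S) {δ : ℝ} (hδ : 0 < δ) :
    ∃ P : Finset X, ↑P ⊆ S ∧ (P : Set X).Pairwise (fun p q => δ < dist p q) ∧
      S ⊆ ⋃ p ∈ P, closedBall p δ := by
  set ε : ℝ≥0 := δ.toNNReal
  have hε : (ε : ℝ) = δ := Real.coe_toNNReal _ hδ.le
  have hε0 : ε / 2 ≠ 0 := by simpa [ε] using hδ
  obtain ⟨C, -, hCfin, hC⟩ := exists_finite_isCover_of_totallyBounded hε0 hS
  have hpack : packingNumber ε S ≠ ⊤ := by
    have h2 : 2 * (ε / 2) = ε := mul_div_cancel₀ _ two_ne_zero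
    have := (packingNumber_two_mul_le_externalCoveringNumber (ε / 2) S).trans
      hC.externalCoveringNumber_le_encard
    rw [h2] at this
    exact ne_top_of_le_ne_top hCfin.encard_lt_top.ne this
  have hfin : (maximalSeparatedSet ε S).Finite := by
    rw [← Set.encard_ne_top_iff, encard_maximalSeparatedSet hpack]; exact hpack
  refine ⟨hfin.toFinset, by simpa using maximalSeparatedSet_subset, ?_, ?_⟩
  · intro p hp q hq hpq
    have : ENNReal.ofReal δ < edist p q :=
      isSeparated_maximalSeparatedSet (by simpa using hp) (by simpa using hq) hpq
    rwa [edist_dist, ENNReal.ofReal_lt_ofReal_iff_of_nonneg hδ.le] at this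
  · have := (isCover_iff_subset_iUnion_closedBall.mp (isCover_maximalSeparatedSet hpack))
    simpa [hε] using this

theorem card_mul_measure_ball_le {E : Type*} [NormedAddCommGroup E] [MeasurableSpace E]
    [BorelSpace E] (μ : Measure E) [μ.IsAddHaarMeasure] {P : Finset E} {ρ : ℝ}
    (hP : (P : Set E).Pairwise fun p q => 2 * ρ ≤ dist p q) {T : Set E}
    (hT : ∀ p ∈ P, ball p ρ ⊆ T) : #P * μ (ball 0 ρ) ≤ μ T := calc
  #P * μ (ball 0 ρ) = ∑ p ∈ P, μ (ball p ρ) := by simp [Measure.addHaar_ball_center]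
  _ = μ (⋃ p ∈ P, ball p ρ) := by
    refine (measure_biUnion_finset (fun p hp q hq hpq => ?_) fun _ _ => measurableSet_ball).symm
    exact ball_disjoint_ball (by linarith [hP hp hq hpq])
  _ ≤ μ T := measure_mono (Set.iUnion₂_subset hT)

theorem Submodule.exists_finrank_eq {K V : Type*} [DivisionRing K] [AddCommGroup V] [Module K V]
    {k : ℕ} (hk : k ≤ finrank K V) : ∃ W : Submodule K V, finrank K W = k := by
  obtain ⟨f, hf⟩ := exists_linearIndependent_of_le_finrank hk
  exact ⟨Submodule.span K (Set.range f), by rw [finrank_span_eq_card hf, Fintype.card_fin]⟩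

theorem AffineSubspace.norm_starProjection_orthogonal_sub_lt {E : Type*} [NormedAddCommGroup E]
    [InnerProductSpace ℝ E] {V : AffineSubspace ℝ E} [V.direction.HasOrthogonalProjection]
    {q z : E} (hq : q ∈ V) {s : ℝ} (hz : infDist z V < s) :
    ‖V.directionᗮ.starProjection (z - q)‖ < s := by
  obtain ⟨v, hv, hzv⟩ := (infDist_lt_iff ⟨q, hq⟩).mp hz
  have hvq : v - q ∈ V.direction := V.vsub_mem_direction hv hq
  calc ‖V.directionᗮ.starProjection (z - q)‖ = ‖V.directionᗮ.starProjection (z - v)‖ := by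
        rw [show z - q = (z - v) + (v - q) by abel, map_add,
          Submodule.starProjection_orthogonal_apply_eq_zero hvq, add_zero]
    _ ≤ ‖z - v‖ := V.directionᗮ.norm_starProjection_apply_le _
    _ < s := by rwa [← dist_eq_norm]

theorem unitBallVol_nonneg (j : ℕ) : 0 ≤ unitBallVol j := ENNReal.toReal_nonneg

theorem unitBallVol_pos (j : ℕ) : 0 < unitBallVol j :=
  ENNReal.toReal_pos (measure_ball_pos volume 0 one_pos).ne' measure_ball_lt_top.ne

section InnerProductSpace

variable {E : Type*} [NormedAddCommGroup E] [InnerProductSpace ℝ E] [FiniteDimensional ℝ E]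
  [MeasurableSpace E] [BorelSpace E]

theorem volume_setOf_norm_starProjection_le (K : Submodule ℝ E) (a b : ℝ) :
    volume {y : E | ‖K.starProjection y‖ ≤ a ∧ ‖Kᗮ.starProjection y‖ ≤ b} =
      volume (closedBall (0 : K) a) * volume (closedBall (0 : Kᗮ) b) := by
  have hf : MeasurePreserving (fun y => WithLp.ofLp (K.orthogonalDecomposition y)) :=
    (WithLp.volume_preserving_ofLp K Kᗮ).comp K.orthogonalDecomposition.measurePreserving
  have hset : {y : E | ‖K.starProjection y‖ ≤ a ∧ ‖Kᗮ.starProjection y‖ ≤ b} =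
      (fun y => WithLp.ofLp (K.orthogonalDecomposition y)) ⁻¹'
        (closedBall 0 a ×ˢ closedBall 0 b) := by
    ext y; simp
  rw [hset, hf.measure_preimage
    (measurableSet_closedBall.prod measurableSet_closedBall).nullMeasurableSet,
    Measure.volume_eq_prod, Measure.prod_prod]

theorem volume_unitBall_of_finrank_eq {m : ℕ} (hm : finrank ℝ E = m) :
    volume (ball (0 : E) 1) = ENNReal.ofReal (unitBallVol m) := by
  let e : E ≃ₗᵢ[ℝ] EuclideanSpace ℝ (Fin m) :=
    ((stdOrthonormalBasis ℝ E).reindex (finCongr hm)).repr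
  rw [unitBallVol, ENNReal.ofReal_toReal measure_ball_lt_top.ne,
    ← e.measurePreserving.measure_preimage measurableSet_ball.nullMeasurableSet,
    e.preimage_ball, map_zero]

theorem volume_closedBall_of_finrank_eq {m : ℕ} (hm : finrank ℝ E = m) (x : E) {a : ℝ}
    (ha : 0 ≤ a) : volume (closedBall x a) = ENNReal.ofReal (a ^ m * unitBallVol m) := by
  rw [Measure.addHaar_closedBall volume x ha, hm, volume_unitBall_of_finrank_eq hm,
    ← ENNReal.ofReal_mul (by positivity)]

theorem volume_ball_of_finrank_eq {m : ℕ} (hm : finrank ℝ E = m) (x : E) {a : ℝ}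
    (ha : 0 < a) : volume (ball x a) = ENNReal.ofReal (a ^ m * unitBallVol m) := by
  rw [Measure.addHaar_ball_of_pos volume x ha, hm, volume_unitBall_of_finrank_eq hm,
    ← ENNReal.ofReal_mul (by positivity)]

theorem card_mul_le_of_norm_starProjection_le {n k : ℕ} (hn : finrank ℝ E = n) {K : Submodule ℝ E}
    (hK : finrank ℝ K = k) {P : Finset E} {ρ : ℝ} (hρ : 0 < ρ)
    (hP : (P : Set E).Pairwise fun p q => 2 * ρ ≤ dist p q) (q : E) {a b : ℝ} (ha : 0 ≤ a)
    (hb : 0 ≤ b) (hPa : ∀ p ∈ P, ‖K.starProjection (p - q)‖ + ρ ≤ a)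
    (hPb : ∀ p ∈ P, ‖Kᗮ.starProjection (p - q)‖ + ρ ≤ b) :
    #P * (ρ ^ n * unitBallVol n) ≤ a ^ k * unitBallVol k * (b ^ (n - k) * unitBallVol (n - k)) := by
  have hKperp : finrank ℝ Kᗮ = n - k := by
    have := K.finrank_add_finrank_orthogonal; omega
  have hωk := unitBallVol_nonneg k
  have hωnk := unitBallVol_nonneg (n - k)
  have hproj (L : Submodule ℝ E) (p y : E) (hy : y ∈ ball p ρ) :
      ‖L.starProjection (y + -q)‖ < ‖L.starProjection (p - q)‖ + ρ := calc
    ‖L.starProjection (y + -q)‖ = ‖L.starProjection (p - q) + L.starProjection (y - p)‖ := by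
      rw [← map_add, show p - q + (y - p) = y + -q by abel]
    _ ≤ ‖L.starProjection (p - q)‖ + ‖y - p‖ :=
      (norm_add_le _ _).trans (add_le_add_right (L.norm_starProjection_apply_le _) _)
    _ < ‖L.starProjection (p - q)‖ + ρ := by rw [← dist_eq_norm]; gcongr; exact hy
  have h := card_mul_measure_ball_le volume hP (T := (· + -q) ⁻¹'
      {y | ‖K.starProjection y‖ ≤ a ∧ ‖Kᗮ.starProjection y‖ ≤ b}) fun p hp y hy =>
    ⟨(hproj K p y hy).le.trans (hPa p hp), (hproj Kᗮ p y hy).le.trans (hPb p hp)⟩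
  rw [measure_preimage_add_right, volume_setOf_norm_starProjection_le,
    volume_closedBall_of_finrank_eq hK _ ha, volume_closedBall_of_finrank_eq hKperp _ hb,
    volume_ball_of_finrank_eq hn _ hρ, ← ENNReal.ofReal_natCast,
    ← ENNReal.ofReal_mul (Nat.cast_nonneg _), ← ENNReal.ofReal_mul (by positivity)] at h
  exact (ENNReal.ofReal_le_ofReal_iff (by positivity)).mp h

theorem card_mul_pow_mul_unitBallVol_le_of_infDist_lt {n k : ℕ} (hn : finrank ℝ E = n)
    {V : AffineSubspace ℝ E} (hVne : (V : Set E).Nonempty) (hVk : finrank ℝ V.direction = k)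
    {x : E} {r t : ℝ} (hr : 0 < r) (ht0 : 0 < t) (ht : t ≤ 1 / 2) (hxV : infDist x V < t * r)
    {P : Finset E} (hPx : ∀ p ∈ P, dist p x ≤ r)
    (hPsep : (P : Set E).Pairwise fun p q => t * r < dist p q)
    (hPV : ∀ p ∈ P, infDist p V < t * r) :
    #P * t ^ k * unitBallVol n ≤ 4 ^ k * 3 ^ (n - k) * (unitBallVol k * unitBallVol (n - k)) := by
  obtain ⟨q, hqV, hxq⟩ := (infDist_lt_iff hVne).mp hxV
  set ρ := t * r / 2 with hρ
  have hslab := card_mul_le_of_norm_starProjection_le hn hVk (ρ := ρ) (by positivity)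
    (fun p hp p' hp' hpp' => by linarith [hPsep hp hp' hpp']) q (a := 2 * r) (b := 3 * ρ)
    (by positivity) (by positivity) (fun p hp => ?_)
    fun p hp => by linarith [V.norm_starProjection_orthogonal_sub_lt hqV (hPV p hp)]
  swap
  -- `‖π_V (p - q)‖ + ρ ≤ dist p x + dist x q + ρ ≤ r + t r + t r / 2 ≤ 2 r`
  · linarith [V.direction.norm_starProjection_apply_le (p - q), dist_eq_norm p q,
      dist_triangle p x q, hPx p hp, mul_le_mul_of_nonneg_right ht hr.le]
  obtain ⟨m, rfl⟩ := Nat.exists_eq_add_of_le (hn ▸ hVk ▸ V.direction.finrank_le)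
  rw [Nat.add_sub_cancel_left] at hslab ⊢
  have hball : #P * ρ ^ k * unitBallVol (k + m) ≤
      2 ^ k * 3 ^ m * r ^ k * (unitBallVol k * unitBallVol m) := by
    refine le_of_mul_le_mul_right ?_ (by positivity : 0 < ρ ^ m)
    calc #P * ρ ^ k * unitBallVol (k + m) * ρ ^ m
        = #P * (ρ ^ (k + m) * unitBallVol (k + m)) := by ring
      _ ≤ (2 * r) ^ k * unitBallVol k * ((3 * ρ) ^ m * unitBallVol m) := hslab
      _ = 2 ^ k * 3 ^ m * r ^ k * (unitBallVol k * unitBallVol m) * ρ ^ m := by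
        rw [mul_pow, mul_pow]; ring
  refine le_of_mul_le_mul_right ?_ (by positivity : 0 < r ^ k)
  calc #P * t ^ k * unitBallVol (k + m) * r ^ k = #P * ρ ^ k * unitBallVol (k + m) * 2 ^ k := by
        rw [hρ, div_pow, mul_pow]; field_simp
    _ ≤ 2 ^ k * 3 ^ m * r ^ k * (unitBallVol k * unitBallVol m) * 2 ^ k := by gcongr
    _ = 4 ^ k * 3 ^ m * (unitBallVol k * unitBallVol m) * r ^ k := by
        rw [show (4 : ℝ) = 2 * 2 by norm_num, mul_pow]; ring

end InnerProductSpace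

theorem unitBallVol_le_mul {n k : ℕ} (hkn : k ≤ n) :
    unitBallVol n ≤ unitBallVol k * unitBallVol (n - k) := by
  obtain ⟨W, hW⟩ := Submodule.exists_finrank_eq (K := ℝ) (V := EuclideanSpace ℝ (Fin n))
    (k := k) (by rwa [finrank_euclideanSpace_fin])
  have hWperp : finrank ℝ Wᗮ = n - k := by
    have := W.finrank_add_finrank_orthogonal; rw [finrank_euclideanSpace_fin] at this; omega
  have hsub : ball (0 : EuclideanSpace ℝ (Fin n)) 1 ⊆
      {y | ‖W.starProjection y‖ ≤ 1 ∧ ‖Wᗮ.starProjection y‖ ≤ 1} := fun y hy => by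
    rw [mem_ball_zero_iff] at hy
    exact ⟨(W.norm_starProjection_apply_le y).trans hy.le,
      (Wᗮ.norm_starProjection_apply_le y).trans hy.le⟩
  have := measure_mono (μ := volume) hsub
  rw [volume_setOf_norm_starProjection_le, volume_closedBall_of_finrank_eq hW _ zero_le_one,
    volume_closedBall_of_finrank_eq hWperp _ zero_le_one,
    volume_unitBall_of_finrank_eq finrank_euclideanSpace_fin, one_pow, one_pow, one_mul, one_mul,
    ← ENNReal.ofReal_mul (unitBallVol_nonneg k)] at this
  exact (ENNReal.ofReal_le_ofReal_iff
    (mul_nonneg (unitBallVol_nonneg k) (unitBallVol_nonneg _))).mp this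

def IsADRegular {X : Type*} [MeasurableSpace X] [PseudoMetricSpace X] (μ : Measure X)
    (α D : ℝ) : Prop :=
  ∀ x ∈ msupport μ, ∀ r : ℝ, 0 < r → ENNReal.ofReal r < ediam (msupport μ) →
    ENNReal.ofReal (D⁻¹ * r ^ α) ≤ μ (closedBall x r) ∧
      μ (closedBall x r) ≤ ENNReal.ofReal (D * r ^ α)

theorem IsADRegular.one_le {X : Type*} [MeasurableSpace X] [PseudoMetricSpace X]
    {μ : Measure X} {α D : ℝ} (h : IsADRegular μ α D) (hD : 0 < D) {x : X}
    (hx : x ∈ msupport μ) {r : ℝ} (hr : 0 < r)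
    (hr' : ENNReal.ofReal r < ediam (msupport μ)) : 1 ≤ D := by
  obtain ⟨hlow, hup⟩ := h x hx r hr hr'
  have hinv : D⁻¹ ≤ D := le_of_mul_le_mul_right
    ((ENNReal.ofReal_le_ofReal_iff (by positivity)).mp (hlow.trans hup)) (Real.rpow_pos_of_pos hr α)
  by_contra! hD1
  linarith [(one_lt_inv₀ hD).mpr hD1]

theorem IsADRegular.exists_separated_net {X : Type*} [MeasurableSpace X] [PseudoMetricSpace X]
    [ProperSpace X] [HereditarilyLindelofSpace X] {μ : Measure X} {α D : ℝ}
    (h : IsADRegular μ α D) (hD : 0 < D) {x : X} (hx : x ∈ msupport μ) {r : ℝ} (hr : 0 < r)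
    (hr' : ENNReal.ofReal r < ediam (msupport μ)) {t : ℝ} (ht0 : 0 < t) (ht1 : t ≤ 1) :
    ∃ P : Finset X, ↑P ⊆ closedBall x r ∩ msupport μ ∧
      (P : Set X).Pairwise (fun p q => t * r < dist p q) ∧ (D ^ 2)⁻¹ ≤ #P * t ^ α := by
  have htr : 0 < t * r := mul_pos ht0 hr
  obtain ⟨P, hPS, hPsep, hcov⟩ := ((isCompact_closedBall x r).totallyBounded.subset
    Set.inter_subset_left).exists_finset_separated_cover htr
  refine ⟨P, hPS, hPsep, ?_⟩
  have htr' : ENNReal.ofReal (t * r) < ediam (msupport μ) :=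
    (ENNReal.ofReal_le_ofReal (mul_le_of_le_one_left hr.le ht1)).trans_lt hr'
  have hmeas : ENNReal.ofReal (D⁻¹ * r ^ α) ≤ ENNReal.ofReal (#P * (D * (t * r) ^ α)) := calc
    _ ≤ μ (closedBall x r) := (h x hx r hr hr').1
    _ = μ (closedBall x r ∩ msupport μ) := (measure_inter_conull (measure_compl_msupport μ)).symm
    _ ≤ μ (⋃ p ∈ P, closedBall p (t * r)) := measure_mono hcov
    _ ≤ ∑ p ∈ P, μ (closedBall p (t * r)) := measure_biUnion_finset_le P _
    _ ≤ ∑ _p ∈ P, ENNReal.ofReal (D * (t * r) ^ α) :=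
      Finset.sum_le_sum fun p hp => (h p (hPS hp).2 _ htr htr').2
    _ = ENNReal.ofReal (#P * (D * (t * r) ^ α)) := by
      rw [Finset.sum_const, nsmul_eq_mul, ENNReal.ofReal_mul (Nat.cast_nonneg _),
        ENNReal.ofReal_natCast]
  rw [ENNReal.ofReal_le_ofReal_iff (by positivity), Real.mul_rpow ht0.le hr.le] at hmeas
  have hrα : 0 < r ^ α := Real.rpow_pos_of_pos hr α
  calc (D ^ 2)⁻¹ = D⁻¹ * r ^ α / (D * r ^ α) := by field_simp
    _ ≤ #P * (D * (t ^ α * r ^ α)) / (D * r ^ α) := by gcongr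
    _ = #P * t ^ α := by field_simp

section InnerProductSpace

variable {E : Type*} [NormedAddCommGroup E] [InnerProductSpace ℝ E] [FiniteDimensional ℝ E]
  [MeasurableSpace E] [BorelSpace E]

theorem IsADRegular.inv_sq_mul_unitBallVol_le_of_infDist_lt {μ : Measure E} {α D : ℝ}
    (h : IsADRegular μ α D) (hD : 0 < D) {n k : ℕ} (hn : finrank ℝ E = n) {x : E}
    (hx : x ∈ msupport μ) {r : ℝ} (hr : 0 < r)
    (hr' : ENNReal.ofReal r < ediam (msupport μ)) {V : AffineSubspace ℝ E}
    (hVne : (V : Set E).Nonempty) (hVk : finrank ℝ V.direction = k) {t : ℝ} (ht0 : 0 < t)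
    (ht : t ≤ 1 / 2) (hclose : ∀ z ∈ closedBall x r ∩ msupport μ, infDist z V < t * r) :
    (D ^ 2)⁻¹ * unitBallVol n ≤
      4 ^ k * 3 ^ (n - k) * (unitBallVol k * unitBallVol (n - k)) * t ^ (α - k) := by
  obtain ⟨P, hPS, hPsep, hPcard⟩ := h.exists_separated_net hD hx hr hr' ht0 (by linarith)
  have hcount := card_mul_pow_mul_unitBallVol_le_of_infDist_lt hn hVne hVk hr ht0 ht
    (hclose x ⟨mem_closedBall_self hr.le, hx⟩) (fun p hp => (hPS hp).1) hPsep
    fun p hp => hclose p (hPS hp)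
  have hsplit : t ^ α = t ^ k * t ^ (α - k) := by
    rw [← Real.rpow_natCast, ← Real.rpow_add ht0]; ring_nf
  calc (D ^ 2)⁻¹ * unitBallVol n ≤ #P * t ^ α * unitBallVol n := by
        gcongr; exact unitBallVol_nonneg _
    _ = #P * t ^ k * unitBallVol n * t ^ (α - k) := by rw [hsplit]; ring
    _ ≤ _ := by gcongr

theorem IsADRegular.le_finrank {μ : Measure E} {α D : ℝ} (h : IsADRegular μ α D)
    (hD : 0 < D) {n : ℕ} (hn : finrank ℝ E = n) {x : E} (hx : x ∈ msupport μ) {r : ℝ}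
    (hr : 0 < r) (hr' : ENNReal.ofReal r < ediam (msupport μ)) : α ≤ n := by
  by_contra! hnα
  obtain ⟨C, hbound⟩ : ∃ C, ∀ t ∈ Set.Ioc (0 : ℝ) (1 / 2),
      (D ^ 2)⁻¹ * unitBallVol n ≤ C * t ^ (α - n) :=
    ⟨_, fun t ht => h.inv_sq_mul_unitBallVol_le_of_infDist_lt hD hn hx hr hr' (V := ⊤) (by simp)
      (by rw [AffineSubspace.direction_top, finrank_top, hn]) ht.1 ht.2
      fun z _ => by simpa [infDist_zero_of_mem] using mul_pos ht.1 hr⟩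
  have hlim : Filter.Tendsto (fun t : ℝ => C * t ^ (α - n)) (𝓝[>] 0) (𝓝 0) := by
    have := ((Real.continuousAt_rpow_const 0 (α - n) (Or.inr (by linarith))).tendsto.const_mul
      C).mono_left (nhdsWithin_le_nhds (s := Set.Ioi 0))
    simpa [Real.zero_rpow (sub_pos.mpr hnα).ne'] using this
  have hpos : 0 < (D ^ 2)⁻¹ * unitBallVol n := by have := unitBallVol_pos n; positivity
  obtain ⟨t, hlt, ht⟩ := ((hlim.eventually (gt_mem_nhds hpos)).and
    (Ioc_mem_nhdsGT (by norm_num : (0 : ℝ) < 1 / 2))).exists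
  exact hlt.not_ge (hbound t ht)

end InnerProductSpace

theorem IsADRegular.le_betaInfty {n : ℕ} {μ : Measure (EuclideanSpace ℝ (Fin n))} {α D : ℝ}
    (h : IsADRegular μ α D) (hD : 0 < D) {x : EuclideanSpace ℝ (Fin n)}
    (hx : x ∈ msupport μ) {r : ℝ} (hr : 0 < r)
    (hr' : ENNReal.ofReal r < ediam (msupport μ)) {k : ℕ} (hkn : k ≤ n) {θ : ℝ}
    (hθ0 : 0 < θ) (hθ : θ ≤ 1 / 2)
    (hθc : 4 ^ k * 3 ^ (n - k) * (unitBallVol k * unitBallVol (n - k)) * θ ^ (α - k) <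
      (D ^ 2)⁻¹ * unitBallVol n) :
    θ ≤ betaInfty μ k x r := by
  obtain ⟨W, hW⟩ := Submodule.exists_finrank_eq (K := ℝ) (V := EuclideanSpace ℝ (Fin n))
    (k := k) (by rwa [finrank_euclideanSpace_fin])
  have : Nonempty {V : AffineSubspace ℝ (EuclideanSpace ℝ (Fin n)) //
      (V : Set (EuclideanSpace ℝ (Fin n))).Nonempty ∧ finrank ℝ V.direction = k} :=
    ⟨⟨AffineSubspace.mk' x W, ⟨x, AffineSubspace.self_mem_mk' x W⟩, by
      rwa [AffineSubspace.direction_mk']⟩⟩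
  refine le_ciInf fun ⟨V, hVne, hVk⟩ => ?_
  by_contra! hlt
  have hbdd : BddAbove ((fun z => infDist z (V : Set (EuclideanSpace ℝ (Fin n))) / r) ''
      (closedBall x r ∩ msupport μ)) :=
    ((isCompact_closedBall x r).bddAbove_image
      ((continuous_infDist_pt _).div_const r).continuousOn).mono
      (Set.image_mono Set.inter_subset_left)
  refine (h.inv_sq_mul_unitBallVol_le_of_infDist_lt hD finrank_euclideanSpace_fin hx hr hr'
    hVne hVk hθ0 hθ fun z hz => ?_).not_gt hθc
  rw [← div_lt_iff₀ hr]
  exact (le_csSup hbdd ⟨z, hz, rfl⟩).trans_lt hlt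

theorem IsADRegular.rpow_le_betaInfty {n : ℕ} {μ : Measure (EuclideanSpace ℝ (Fin n))}
    {α D : ℝ} (h : IsADRegular μ α D) (hD : 0 < D) {x : EuclideanSpace ℝ (Fin n)}
    (hx : x ∈ msupport μ) {r : ℝ} (hr : 0 < r) (hr' : ENNReal.ofReal r < ediam (msupport μ))
    {k : ℕ} (hkα : k < α) (hαn : α ≤ n) {c : ℝ} (hc0 : 0 < c) (hc : c ≤ ((4 : ℝ) ^ n)⁻¹)
    (hthresh : 4 ^ k * 3 ^ (n - k) * (unitBallVol k * unitBallVol (n - k)) * c <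
      (D ^ 2)⁻¹ * unitBallVol n) :
    c ≤ betaInfty μ k x r ^ (α - k) := by
  have hαk : 0 < α - k := sub_pos.mpr hkα
  set θ := c ^ (α - k)⁻¹
  have hθc : θ ^ (α - k) = c := Real.rpow_inv_rpow hc0.le hαk.ne'
  have hθ0 : 0 < θ := Real.rpow_pos_of_pos hc0 _
  have hθ : θ ≤ 1 / 2 := by
    rw [← Real.rpow_le_rpow_iff hθ0.le (by norm_num) hαk, hθc]
    calc c ≤ ((4 : ℝ) ^ n)⁻¹ := hc
      _ = (1 / 2) ^ ((2 * n : ℕ) : ℝ) := by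
        rw [Real.rpow_natCast, pow_mul, one_div, inv_pow, inv_pow]; norm_num
      _ ≤ (1 / 2) ^ (α - k) := Real.rpow_le_rpow_of_exponent_ge (by norm_num) (by norm_num)
        (by push_cast; linarith [(Nat.cast_nonneg k : (0 : ℝ) ≤ k)])
  have hkn : k ≤ n := by exact_mod_cast (hkα.trans_le hαn).le
  exact hθc ▸ Real.rpow_le_rpow hθ0.le
    (h.le_betaInfty hD hx hr hr' hkn hθ0 hθ (hθc.symm ▸ hthresh)) hαk.le

/-- If `μ` is `α`-AD-regular with constant `D` and `k < α`, then for every `x ∈ supp μ` and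
`0 < r < diam supp μ`, `β_∞^k(x,r)^{α−k} ≥ 4^{−n} D^{−2} ω_n/(ω_k ω_{n−k})`. -/
theorem stmt13 {n : ℕ} (μ : Measure (EuclideanSpace ℝ (Fin n))) (α D : ℝ)
    (hD : 0 < D)
    (hreg : ∀ x ∈ msupport μ, ∀ r : ℝ, 0 < r →
      ENNReal.ofReal r < EMetric.diam (msupport μ) →
      ENNReal.ofReal (D⁻¹ * r ^ α) ≤ μ (closedBall x r) ∧
        μ (closedBall x r) ≤ ENNReal.ofReal (D * r ^ α))
    (k : ℕ) (hk : (k : ℝ) < α)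
    (x : EuclideanSpace ℝ (Fin n)) (hx : x ∈ msupport μ)
    (r : ℝ) (hr : 0 < r) (hr' : ENNReal.ofReal r < EMetric.diam (msupport μ)) :
    ((4 : ℝ) ^ n)⁻¹ * (D ^ 2)⁻¹ * unitBallVol n / (unitBallVol k * unitBallVol (n - k)) ≤
      betaInfty μ k x r ^ (α - k) := by
  have hAD : IsADRegular μ α D := hreg
  have hαn : α ≤ n := hAD.le_finrank hD finrank_euclideanSpace_fin hx hr hr'
  have hkn : k < n := by exact_mod_cast hk.trans_le hαn
  have hωn := unitBallVol_pos n
  have hωk := unitBallVol_pos k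
  have hωnk := unitBallVol_pos (n - k)
  refine hAD.rpow_le_betaInfty hD hx hr hr' hk hαn (by positivity) ?_ ?_
  · rw [mul_div_assoc]
    refine (mul_le_of_le_one_right (by positivity) ?_).trans
      (mul_le_of_le_one_right (by positivity) ?_)
    · exact (div_le_one (by positivity)).mpr (unitBallVol_le_mul hkn.le)
    · exact inv_le_one_of_one_le₀ (one_le_pow₀ (hAD.one_le hD hx hr hr'))
  · have h4 : (4 : ℝ) ^ n = 4 ^ k * 4 ^ (n - k) := by rw [← pow_add, Nat.add_sub_cancel' hkn.le]
    have h34 : (3 : ℝ) ^ (n - k) < 4 ^ (n - k) :=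
      pow_lt_pow_left₀ (by norm_num) (by norm_num) (by omega)
    calc 4 ^ k * 3 ^ (n - k) * (unitBallVol k * unitBallVol (n - k)) *
          (((4 : ℝ) ^ n)⁻¹ * (D ^ 2)⁻¹ * unitBallVol n / (unitBallVol k * unitBallVol (n - k)))
        = 3 ^ (n - k) / 4 ^ (n - k) * ((D ^ 2)⁻¹ * unitBallVol n) := by rw [h4]; field_simp
      _ < 1 * ((D ^ 2)⁻¹ * unitBallVol n) := by
          gcongr; exact (div_lt_one (by positivity)).mpr h34
      _ = (D ^ 2)⁻¹ * unitBallVol n := one_mul _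
end

section
/- Let e be a unit vector in ℝⁿ and V a linear subspace with dist(e, V) ≥ ϑ for some ϑ ∈ (0,1]. Let ê := P_{V^⊥} e / |P_{V^⊥} e|, where P_{V^⊥} is orthogonal projection onto V^⊥. Then for every σ ∈ (0,1) with √(1−σ²) > √(1−ϑ²), the cone C(e,σ) := {x : ⟨x,e⟩ ≥ √(1−σ²)|x|} is contained in C(ê, σ'') where σ'' is defined by √(1−σ''²) = √(1−σ²) − √(1−ϑ²). -/
open Metric
open scoped RealInnerProductSpace

/-- The cone `C(e,σ) = {x : ⟪x,e⟫ ≥ √(1−σ²) |x|}` of axis `e` and amplitude `σ`. -/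
def coneS {n : ℕ} (e : EuclideanSpace ℝ (Fin n)) (σ : ℝ) : Set (EuclideanSpace ℝ (Fin n)) :=
  {x | Real.sqrt (1 - σ ^ 2) * ‖x‖ ≤ ⟪x, e⟫}

/-!
Split `e = q + p` with `q = P_V e` and `p = P_{V^⊥} e`. The distance from `e` to `V` is `‖p‖`,
so by Pythagoras `‖q‖ ≤ √(1 - ϑ²)`, and Cauchy–Schwarz on `⟪x, q⟫` leaves
`⟪x, p⟫ ≥ (√(1 - σ²) - √(1 - ϑ²)) ‖x‖` for `x` in the cone. Since `‖p‖ ≤ 1`, normalising `p`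
can only increase this nonnegative inner product.
-/

namespace Submodule

variable {E : Type*} [NormedAddCommGroup E] [InnerProductSpace ℝ E]
  (K : Submodule ℝ E) [K.HasOrthogonalProjection]

theorem infDist_eq_norm_starProjection_orthogonal (v : E) :
    infDist v (K : Set E) = ‖Kᗮ.starProjection v‖ := by
  rw [infDist_eq_iInf, starProjection_orthogonal', sub_apply, one_apply_eq_self,
    starProjection_minimal]
  simp only [dist_eq_norm]
  rfl

theorem norm_starProjection_le_sqrt_of_le_norm_starProjection_orthogonal {v : E} (hv : ‖v‖ = 1)
    {ϑ : ℝ} (hϑ : 0 ≤ ϑ) (hϑv : ϑ ≤ ‖Kᗮ.starProjection v‖) :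
    ‖K.starProjection v‖ ≤ √(1 - ϑ ^ 2) := by
  have hpyth := K.norm_sq_eq_add_norm_sq_starProjection v
  rw [hv] at hpyth
  refine Real.le_sqrt_of_sq_le ?_
  nlinarith [mul_le_mul hϑv hϑv hϑ (norm_nonneg _)]

end Submodule

section InnerBounds

variable {E : Type*} [NormedAddCommGroup E] [InnerProductSpace ℝ E]

theorem sub_mul_norm_le_inner_of_le_inner_add {x p q : E} {s t : ℝ}
    (hx : s * ‖x‖ ≤ ⟪x, q + p⟫) (hq : ‖q‖ ≤ t) : (s - t) * ‖x‖ ≤ ⟪x, p⟫ := by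
  have hxq : ⟪x, q⟫ ≤ t * ‖x‖ :=
    calc ⟪x, q⟫ ≤ ‖x‖ * ‖q‖ := real_inner_le_norm x q
      _ ≤ ‖x‖ * t := by gcongr
      _ = t * ‖x‖ := mul_comm _ _
  rw [inner_add_right] at hx
  linarith

theorem le_inner_inv_norm_smul_of_le_inner {x p : E} {a : ℝ} (ha : 0 ≤ a) (hap : a ≤ ⟪x, p⟫)
    (hp : ‖p‖ ≤ 1) : a ≤ ⟪x, ‖p‖⁻¹ • p⟫ := by
  obtain rfl | hp0 := eq_or_ne p 0
  · simpa using hap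
  · rw [real_inner_smul_right, inv_mul_eq_div]
    exact hap.trans (le_div_self (ha.trans hap) (norm_pos_iff.2 hp0) hp)

end InnerBounds

theorem stmt17_general {n : ℕ} (V : Submodule ℝ (EuclideanSpace ℝ (Fin n)))
    (e : EuclideanSpace ℝ (Fin n)) (he : ‖e‖ = 1)
    (ϑ σ : ℝ) (hϑ0 : 0 < ϑ)
    (hdist : ϑ ≤ Metric.infDist e (V : Set (EuclideanSpace ℝ (Fin n))))
    (hgt : Real.sqrt (1 - ϑ ^ 2) < Real.sqrt (1 - σ ^ 2)) :
    coneS e σ ⊆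
      {x | (Real.sqrt (1 - σ ^ 2) - Real.sqrt (1 - ϑ ^ 2)) * ‖x‖ ≤
        ⟪x, ‖((Submodule.orthogonalProjectionOnto Vᗮ e : Vᗮ) : EuclideanSpace ℝ (Fin n))‖⁻¹ •
          ((Submodule.orthogonalProjectionOnto Vᗮ e : Vᗮ) : EuclideanSpace ℝ (Fin n))⟫} := by
  intro x hx
  have hp : ϑ ≤ ‖Vᗮ.starProjection e‖ := V.infDist_eq_norm_starProjection_orthogonal e ▸ hdist
  have hq := V.norm_starProjection_le_sqrt_of_le_norm_starProjection_orthogonal he hϑ0.le hp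
  have hx' : √(1 - σ ^ 2) * ‖x‖ ≤ ⟪x, V.starProjection e + Vᗮ.starProjection e⟫ := by
    rwa [V.starProjection_add_starProjection_orthogonal]
  exact le_inner_inv_norm_smul_of_le_inner (mul_nonneg (sub_nonneg.2 hgt.le) (norm_nonneg x))
    (sub_mul_norm_le_inner_of_le_inner_add hx' hq)
    (he ▸ Vᗮ.norm_starProjection_apply_le e)

/-- If `dist(e,V) ≥ ϑ` and `ê = P_{V^⊥}e/|P_{V^⊥}e|`, then
`C(e,σ) ⊆ C(ê,σ'')` where `√(1−σ''²) = √(1−σ²) − √(1−ϑ²)`; i.e. every `x ∈ C(e,σ)`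
satisfies `⟪x,ê⟫ ≥ (√(1−σ²) − √(1−ϑ²))|x|`. -/
theorem stmt17 {n : ℕ} (V : Submodule ℝ (EuclideanSpace ℝ (Fin n)))
    (e : EuclideanSpace ℝ (Fin n)) (he : ‖e‖ = 1)
    (ϑ σ : ℝ) (hϑ0 : 0 < ϑ) (hϑ1 : ϑ ≤ 1) (hσ0 : 0 < σ) (hσ1 : σ < 1)
    (hdist : ϑ ≤ Metric.infDist e (V : Set (EuclideanSpace ℝ (Fin n))))
    (hgt : Real.sqrt (1 - ϑ ^ 2) < Real.sqrt (1 - σ ^ 2)) :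
    coneS e σ ⊆
      {x | (Real.sqrt (1 - σ ^ 2) - Real.sqrt (1 - ϑ ^ 2)) * ‖x‖ ≤
        ⟪x, ‖((Submodule.orthogonalProjectionOnto Vᗮ e : Vᗮ) : EuclideanSpace ℝ (Fin n))‖⁻¹ •
          ((Submodule.orthogonalProjectionOnto Vᗮ e : Vᗮ) : EuclideanSpace ℝ (Fin n))⟫} :=
  stmt17_general V e he ϑ σ hϑ0 hdist hgt
end

section
/- Let θ ∈ (0,1/2) and ρ ∈ [0,1) with ρ + 2θ < 1. Let 𝓑₁ and 𝓑₂ be two finite families of balls in ℝⁿ with the property that whenever B¹ ∈ 𝓑₁ and B² ∈ 𝓑₂ intersect, diam B² ≤ θ diam B¹. Then there exists a subfamily 𝓒₂ ⊆ 𝓑₂ such that: (i) the balls in 𝓒₂ are pairwise disjoint and every B ∈ 𝓒₂ is contained in (1−ρ)B' for some B' ∈ 𝓑₁; (ii) for every B' ∈ 𝓑₁, the set (1−ρ−2θ)B' ∩ ⋃_{B ∈ 𝓑₂} B is contained in ⋃_{B ∈ 𝓒₂} 5B. -/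
open Metric Set

/-- Vitali-type selection between two finite families of balls: if every ball of `𝓑₂` meeting
a ball of `𝓑₁` has diameter at most `θ` times that ball's diameter, there is a pairwise
disjoint subfamily `𝓒₂ ⊆ 𝓑₂` of balls contained in `(1−ρ)`-shrunk balls of `𝓑₁`, whose
`5`-times enlargements cover `(1−ρ−2θ)B' ∩ ⋃𝓑₂` for every `B' ∈ 𝓑₁`. Balls are encoded
as center–radius pairs. -/
theorem stmt18 {n : ℕ} (θ ρ : ℝ) (hθ : θ ∈ Set.Ioo (0 : ℝ) (1 / 2))
    (hρ : ρ ∈ Set.Ico (0 : ℝ) 1) (hρθ : ρ + 2 * θ < 1)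
    (B₁ B₂ : Finset (EuclideanSpace ℝ (Fin n) × ℝ))
    (h₁ : ∀ b ∈ B₁, 0 < b.2) (h₂ : ∀ b ∈ B₂, 0 < b.2)
    (hint : ∀ b₁ ∈ B₁, ∀ b₂ ∈ B₂,
      (closedBall b₁.1 b₁.2 ∩ closedBall b₂.1 b₂.2).Nonempty → b₂.2 ≤ θ * b₁.2) :
    ∃ C₂ ⊆ B₂,
      ((C₂ : Set (EuclideanSpace ℝ (Fin n) × ℝ)).Pairwise fun a b =>
        Disjoint (closedBall a.1 a.2) (closedBall b.1 b.2)) ∧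
      (∀ b ∈ C₂, ∃ b' ∈ B₁, closedBall b.1 b.2 ⊆ closedBall b'.1 ((1 - ρ) * b'.2)) ∧
      ∀ b' ∈ B₁,
        closedBall b'.1 ((1 - ρ - 2 * θ) * b'.2) ∩ (⋃ b ∈ B₂, closedBall b.1 b.2) ⊆
          ⋃ b ∈ C₂, closedBall b.1 (5 * b.2) := by
  classical
  -- The subfamily `F` of balls of `B₂` contained in a shrunk ball of `B₁`.
  set F : Finset (EuclideanSpace ℝ (Fin n) × ℝ) :=
    B₂.filter (fun b => ∃ b' ∈ B₁, closedBall b.1 b.2 ⊆ closedBall b'.1 ((1 - ρ) * b'.2))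
    with hF
  -- a uniform bound on radii of `F`
  obtain ⟨R, hR⟩ : ∃ R : ℝ, ∀ a ∈ (F : Set (EuclideanSpace ℝ (Fin n) × ℝ)), a.2 ≤ R := by
    obtain ⟨R, hR⟩ := (F.finite_toSet.image Prod.snd).bddAbove
    exact ⟨R, fun a ha => hR ⟨a, ha, rfl⟩⟩
  obtain ⟨u, huF, hdisj, hcov⟩ :=
    Vitali.exists_disjoint_subfamily_covering_enlargement_closedBall
      (F : Set (EuclideanSpace ℝ (Fin n) × ℝ)) Prod.fst Prod.snd R hR 5 (by norm_num)
  have hufin : u.Finite := F.finite_toSet.subset huF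
  refine ⟨hufin.toFinset, ?_, ?_, ?_, ?_⟩
  · intro a ha
    simp only [Set.Finite.mem_toFinset] at ha
    exact (Finset.mem_filter.1 (huF ha)).1
  · intro a ha b hb hab
    simp only [Finset.coe_sort_coe, Set.Finite.coe_toFinset] at ha hb
    exact hdisj ha hb hab
  · intro b hb
    simp only [Set.Finite.mem_toFinset] at hb
    exact (Finset.mem_filter.1 (huF hb)).2
  · intro b' hb' y hy
    obtain ⟨hy1, hy2⟩ := hy
    simp only [Set.mem_iUnion] at hy2
    obtain ⟨b, hbB₂, hyb⟩ := hy2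
    have hb'pos := h₁ b' hb'
    have hbpos := h₂ b hbB₂
    -- `b` meets `b'`
    have hmeet : (closedBall b'.1 b'.2 ∩ closedBall b.1 b.2).Nonempty := by
      refine ⟨y, ?_, hyb⟩
      refine closedBall_subset_closedBall ?_ hy1
      nlinarith [hθ.1, hρ.1]
    have hsmall : b.2 ≤ θ * b'.2 := hint b' hb' b hbB₂ hmeet
    -- so `b ∈ F`
    have hbF : b ∈ F := by
      refine Finset.mem_filter.2 ⟨hbB₂, b', hb', ?_⟩
      intro z hz
      simp only [mem_closedBall] at hz hy1 hyb ⊢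
      have h1 : dist z b'.1 ≤ dist z b.1 + dist b.1 y + dist y b'.1 := by
        calc dist z b'.1 ≤ dist z y + dist y b'.1 := dist_triangle _ _ _
        _ ≤ dist z b.1 + dist b.1 y + dist y b'.1 := by
            have := dist_triangle z b.1 y; linarith
      have h2 : dist b.1 y ≤ b.2 := by rwa [dist_comm]
      nlinarith [hθ.1]
    obtain ⟨c, hcu, hsub⟩ := hcov b hbF
    simp only [Set.mem_iUnion]
    exact ⟨c, Set.Finite.mem_toFinset hufin |>.2 hcu, hsub hyb⟩
end
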